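/- Under the standing assumptions (θ_{n,m} non-increasing, R_n(m) unimodal), for all sufficiently large n the optimal discrete-grid model averaging risk satisfies R_n(w*_{n,N}) − R_n(w*_n) ≤ (1/(2N)) R_n(m*_n), where w*_{n,N} minimizes R_n(w) over the discrete weight set {w : w_m ∈ {0, 1/N, ..., 1}, Σ w_m = 1}. -/

import Mathlib

/-!
Write `Q m = P m - P (m - 1)` for the orthogonal increments of the nested projections,
`b m = μᵀ Q m μ`, `v m = tr (Q m Ω)`, `γ* m = b m / (b m + v m)`, and `γ m = ∑_{j ≥ m} w j` for
the cumulative weights of `w`. Since `∑ w m P m = ∑ γ m Q m`, the risk of `w` is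
`μᵀ (1 - P M) μ + ∑ m, (γ* m v m + (b m + v m) (γ m - γ* m)²)`, and `γ 1 = 1` on the simplex.

Rounding `N γ* m` (for `m ≥ 2`) to the nearest integer `k m` gives non-increasing cumulative
weights, as `γ*` is non-increasing, hence a grid weight, whose risk bounds that of the optimal
grid weight. Since `|k - N γ*| ≤ min (1/2) (min (N γ*) (N (1 - γ*)))`, its excess
`(b + v) (k / N - γ*)²` is at most `min b v / (2N)`, while the excess of the optimal simplex
weight is nonnegative. Bounding the minimum by `v m` for `m ≤ m*` and by `b m` beyond gives
`∑ m, min (b m) (v m) ≤ R(m*)`.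
-/

open Finset Matrix

def tailSum {R : Type*} [AddCommMonoid R] (M : ℕ) (w : ℕ → R) (m : ℕ) : R :=
  ∑ j ∈ Icc m M, w j

namespace Finset

theorem sum_Ioc_sub_pred {α : Type*} [AddCommGroup α] (P : ℕ → α) {a b : ℕ} (hab : a ≤ b) :
    ∑ m ∈ Ioc a b, (P m - P (m - 1)) = P b - P a := by
  induction b, hab using Nat.le_induction with
  | base => simp
  | succ b hab ih => rw [sum_Ioc_succ_top hab, ih, Nat.add_sub_cancel]; abel

theorem sum_Ioc_min_le {α : Type*} [AddCommMonoid α] [LinearOrder α] [IsOrderedAddMonoid α]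
    (f g : ℕ → α) {a k M : ℕ} (hak : a ≤ k) (hkM : k ≤ M) :
    ∑ m ∈ Ioc a M, min (f m) (g m) ≤ ∑ m ∈ Ioc a k, g m + ∑ m ∈ Ioc k M, f m := by
  rw [← sum_Ioc_consecutive _ hak hkM]
  exact add_le_add (sum_le_sum fun m _ => min_le_right _ _)
    (sum_le_sum fun m _ => min_le_left _ _)

theorem sum_smul_mul_sum_smul_of_orthogonal {ι R A : Type*} [DecidableEq ι] [CommSemiring R]
    [Semiring A] [Algebra R A] {s : Finset ι} {Q : ι → A}
    (hQ : ∀ i ∈ s, ∀ j ∈ s, Q i * Q j = if i = j then Q i else 0) (c d : ι → R) :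
    (∑ i ∈ s, c i • Q i) * (∑ j ∈ s, d j • Q j) = ∑ i ∈ s, (c i * d i) • Q i := by
  rw [sum_mul_sum]
  refine sum_congr rfl fun i hi => ?_
  simp_rw [smul_mul_smul_comm]
  rw [sum_congr rfl fun j hj => by rw [hQ i hi j hj]]
  simp [hi]

end Finset

section Increments

variable {α : Type*}

theorem sum_smul_eq_sum_tailSum_smul_sub_pred {R : Type*} [Semiring R] [AddCommGroup α]
    [Module R α] {P : ℕ → α} (hP0 : P 0 = 0) (M : ℕ) (w : ℕ → R) :
    ∑ m ∈ Icc 1 M, w m • P m = ∑ m ∈ Icc 1 M, tailSum M w m • (P m - P (m - 1)) := by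
  calc ∑ m ∈ Icc 1 M, w m • P m
      = ∑ j ∈ Icc 1 M, ∑ m ∈ Icc 1 j, w j • (P m - P (m - 1)) := by
        refine sum_congr rfl fun j _ => ?_
        rw [← smul_sum, show Icc 1 j = Ioc 0 j from Icc_add_one_left_eq_Ioc 0 j,
          sum_Ioc_sub_pred P j.zero_le, hP0, sub_zero]
    _ = ∑ m ∈ Icc 1 M, ∑ j ∈ Icc m M, w j • (P m - P (m - 1)) :=
        sum_comm' fun j m => by simp only [mem_Icc]; omega
    _ = _ := by simp only [tailSum, sum_smul]

variable [Ring α] {M : ℕ} {P : ℕ → α}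

theorem sub_pred_mul_of_nested (hmin : ∀ i j, i ≤ M → j ≤ M → P i * P j = P (min i j))
    {i k : ℕ} (hi : 1 ≤ i) (hiM : i ≤ M) (hkM : k ≤ M) :
    (P i - P (i - 1)) * P k = if i ≤ k then P i - P (i - 1) else 0 := by
  rw [sub_mul, hmin i k hiM hkM, hmin (i - 1) k (by omega) hkM]
  split_ifs with h
  · rw [min_eq_left h, min_eq_left (by omega)]
  · rw [min_eq_right (by omega), min_eq_right (by omega), sub_self]

theorem sub_pred_mul_sub_pred_of_nested
    (hmin : ∀ i j, i ≤ M → j ≤ M → P i * P j = P (min i j)) {i j : ℕ}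
    (hi : 1 ≤ i) (hiM : i ≤ M) (hj : 1 ≤ j) (hjM : j ≤ M) :
    (P i - P (i - 1)) * (P j - P (j - 1)) = if i = j then P i - P (i - 1) else 0 := by
  rw [mul_sub, sub_pred_mul_of_nested hmin hi hiM hjM,
    sub_pred_mul_of_nested hmin hi hiM (by omega)]
  split_ifs <;> first | omega | simp

end Increments

namespace Matrix

variable {ι : Type*} [Fintype ι]

theorem dotProduct_mulVec_nonneg_of_idempotent {A : Matrix ι ι ℝ} (hsymm : Aᵀ = A)
    (hidem : A * A = A) (x : ι → ℝ) : 0 ≤ x ⬝ᵥ (A *ᵥ x) := by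
  have h : x ⬝ᵥ (A *ᵥ x) = star (A *ᵥ x) ⬝ᵥ (A *ᵥ x) := by
    conv_lhs => rw [← hidem, ← mulVec_mulVec, dotProduct_mulVec, ← mulVec_transpose, hsymm]
    rfl
  rw [h]
  exact dotProduct_star_self_nonneg _

theorem dotProduct_sum_smul_mulVec (μ : ι → ℝ) (s : Finset ℕ) (c : ℕ → ℝ)
    (Q : ℕ → Matrix ι ι ℝ) :
    μ ⬝ᵥ ((∑ m ∈ s, c m • Q m) *ᵥ μ) = ∑ m ∈ s, c m * (μ ⬝ᵥ (Q m *ᵥ μ)) := by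
  simp [sum_mulVec, dotProduct_sum, smul_mulVec, dotProduct_smul]

theorem trace_sum_smul_mul (Ω : Matrix ι ι ℝ) (s : Finset ℕ) (c : ℕ → ℝ)
    (Q : ℕ → Matrix ι ι ℝ) :
    ((∑ m ∈ s, c m • Q m) * Ω).trace = ∑ m ∈ s, c m * (Q m * Ω).trace := by
  simp [sum_mul, trace_sum, trace_smul]

end Matrix

section NestedProjections

variable {ι : Type*} [Fintype ι] [DecidableEq ι]

/-- Risk of the estimator `A y` of the mean `μ` of `y` with covariance `Ω`. -/
def averagingRisk (Ω : Matrix ι ι ℝ) (μ : ι → ℝ) (A : Matrix ι ι ℝ) : ℝ :=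
  μ ⬝ᵥ (((A - 1) * (A - 1)) *ᵥ μ) + (A * A * Ω).trace

variable {M : ℕ} {P : ℕ → Matrix ι ι ℝ}

theorem averagingRisk_sum_smul_sub_pred (hP0 : P 0 = 0)
    (hmin : ∀ i j, i ≤ M → j ≤ M → P i * P j = P (min i j))
    (Ω : Matrix ι ι ℝ) (μ : ι → ℝ) (c : ℕ → ℝ) :
    averagingRisk Ω μ (∑ m ∈ Icc 1 M, c m • (P m - P (m - 1))) =
      μ ⬝ᵥ ((1 - P M) *ᵥ μ) + ∑ m ∈ Icc 1 M, ((1 - c m) ^ 2 * (μ ⬝ᵥ ((P m - P (m - 1)) *ᵥ μ))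
        + c m ^ 2 * ((P m - P (m - 1)) * Ω).trace) := by
  set Q : ℕ → Matrix ι ι ℝ := fun m => P m - P (m - 1)
  set A := ∑ m ∈ Icc 1 M, c m • Q m
  have hQ : ∀ i ∈ Icc 1 M, ∀ j ∈ Icc 1 M, Q i * Q j = if i = j then Q i else 0 :=
    fun i hi j hj => sub_pred_mul_sub_pred_of_nested hmin
      (mem_Icc.mp hi).1 (mem_Icc.mp hi).2 (mem_Icc.mp hj).1 (mem_Icc.mp hj).2
  have hAA : A * A = ∑ m ∈ Icc 1 M, c m ^ 2 • Q m := by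
    simp only [A, sum_smul_mul_sum_smul_of_orthogonal hQ, sq]
  have hPM : P M = ∑ m ∈ Icc 1 M, Q m := by
    rw [show Icc 1 M = Ioc 0 M from Icc_add_one_left_eq_Ioc 0 M, sum_Ioc_sub_pred P M.zero_le,
      hP0, sub_zero]
  have hbias : (A - 1) * (A - 1) = (1 - P M) + ∑ m ∈ Icc 1 M, (1 - c m) ^ 2 • Q m := by
    have : ∑ m ∈ Icc 1 M, (1 - c m) ^ 2 • Q m = A * A - A - A + P M := by
      simp only [hAA, hPM, A, ← sum_sub_distrib, ← sum_add_distrib]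
      exact sum_congr rfl fun m _ => by module
    rw [this]
    noncomm_ring
  rw [averagingRisk, hbias, add_mulVec, dotProduct_add, dotProduct_sum_smul_mulVec, hAA,
    trace_sum_smul_mul, add_assoc, ← sum_add_distrib]

theorem dotProduct_one_sub_mulVec_add_trace_eq (hP0 : P 0 = 0) (Ω : Matrix ι ι ℝ) (μ : ι → ℝ)
    {k : ℕ} (hkM : k ≤ M) :
    μ ⬝ᵥ ((1 - P k) *ᵥ μ) + (P k * Ω).trace =
      μ ⬝ᵥ ((1 - P M) *ᵥ μ) + ∑ m ∈ Ioc k M, μ ⬝ᵥ ((P m - P (m - 1)) *ᵥ μ)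
        + ∑ m ∈ Ioc 0 k, ((P m - P (m - 1)) * Ω).trace := by
  rw [← dotProduct_sum, ← sum_mulVec, sum_Ioc_sub_pred P hkM, ← trace_sum, ← sum_mul,
    sum_Ioc_sub_pred P k.zero_le, hP0, sub_zero]
  simp only [sub_mulVec, dotProduct_sub]
  ring

theorem dotProduct_sub_pred_mulVec_nonneg
    (hmin : ∀ i j, i ≤ M → j ≤ M → P i * P j = P (min i j))
    (hsymm : ∀ i, i ≤ M → (P i)ᵀ = P i) {m : ℕ} (hm1 : 1 ≤ m) (hmM : m ≤ M) (μ : ι → ℝ) :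
    0 ≤ μ ⬝ᵥ ((P m - P (m - 1)) *ᵥ μ) :=
  dotProduct_mulVec_nonneg_of_idempotent
    (by rw [transpose_sub, hsymm m hmM, hsymm (m - 1) (by omega)])
    (by simpa using sub_pred_mul_sub_pred_of_nested hmin hm1 hmM hm1 hmM) μ

theorem dotProduct_one_sub_mulVec_nonneg
    (hmin : ∀ i j, i ≤ M → j ≤ M → P i * P j = P (min i j))
    (hsymm : ∀ i, i ≤ M → (P i)ᵀ = P i) (μ : ι → ℝ) :
    0 ≤ μ ⬝ᵥ ((1 - P M) *ᵥ μ) := by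
  refine dotProduct_mulVec_nonneg_of_idempotent
    (by rw [transpose_sub, transpose_one, hsymm M le_rfl]) ?_ μ
  rw [mul_sub, mul_one, sub_mul, one_mul, hmin M M le_rfl le_rfl, min_self, sub_self, sub_zero]

theorem sum_min_le_dotProduct_one_sub_mulVec_add_trace (hP0 : P 0 = 0)
    (hmin : ∀ i j, i ≤ M → j ≤ M → P i * P j = P (min i j))
    (hsymm : ∀ i, i ≤ M → (P i)ᵀ = P i) (Ω : Matrix ι ι ℝ) (μ : ι → ℝ) {k : ℕ} (hkM : k ≤ M) :
    ∑ m ∈ Icc 1 M, min (μ ⬝ᵥ ((P m - P (m - 1)) *ᵥ μ)) ((P m - P (m - 1)) * Ω).trace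
      ≤ μ ⬝ᵥ ((1 - P k) *ᵥ μ) + (P k * Ω).trace := by
  rw [dotProduct_one_sub_mulVec_add_trace_eq hP0 Ω μ hkM,
    show Icc 1 M = Ioc 0 M from Icc_add_one_left_eq_Ioc 0 M]
  linarith [sum_Ioc_min_le (fun m => μ ⬝ᵥ ((P m - P (m - 1)) *ᵥ μ))
    (fun m => ((P m - P (m - 1)) * Ω).trace) k.zero_le hkM,
    dotProduct_one_sub_mulVec_nonneg hmin hsymm μ]

end NestedProjections

section Rounding

noncomputable def excessRisk (b v t : ℝ) : ℝ := (b + v) * (t - b / (b + v)) ^ 2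

theorem sub_sq_mul_add_sq_mul_eq_add_excessRisk {b v : ℝ} (h : b + v ≠ 0) (t : ℝ) :
    (1 - t) ^ 2 * b + t ^ 2 * v = b / (b + v) * v + excessRisk b v t := by
  rw [excessRisk]
  field_simp
  ring

theorem excessRisk_nonneg {b v : ℝ} (h : 0 ≤ b + v) (t : ℝ) : 0 ≤ excessRisk b v t :=
  mul_nonneg h (sq_nonneg _)

theorem sq_natFloor_add_half_sub_le {a : ℝ} (ha : 0 ≤ a) :
    ((⌊a + 1 / 2⌋₊ : ℝ) - a) ^ 2 ≤ a / 2 := by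
  rcases le_or_gt (1 / 2) a with h | h
  · have h1 := Nat.floor_le (by linarith : 0 ≤ a + 1 / 2)
    have h2 := Nat.lt_floor_add_one (a + 1 / 2)
    nlinarith
  · rw [Nat.floor_eq_zero.mpr (by linarith)]
    nlinarith

theorem sq_natFloor_add_half_sub_le_sub {a : ℝ} {N : ℕ} (ha : 0 ≤ a) (haN : a ≤ N) :
    ((⌊a + 1 / 2⌋₊ : ℝ) - a) ^ 2 ≤ (N - a) / 2 := by
  rcases le_or_gt (1 / 2) (N - a) with h | h
  · have h1 := Nat.floor_le (by linarith : 0 ≤ a + 1 / 2)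
    have h2 := Nat.lt_floor_add_one (a + 1 / 2)
    nlinarith
  · rw [(Nat.floor_eq_iff (n := N) (by linarith)).mpr ⟨by linarith, by linarith⟩]
    nlinarith

theorem excessRisk_natFloor_le {b v : ℝ} (hb : 0 ≤ b) (hv : 0 ≤ v) (hbv : 0 < b + v)
    {N : ℕ} (hN : 0 < N) :
    excessRisk b v ((⌊N * (b / (b + v)) + 1 / 2⌋₊ : ℝ) / N) ≤ min b v / (2 * N) := by
  set γ := b / (b + v)
  have hNpos : (0 : ℝ) < N := Nat.cast_pos.mpr hN
  have hγb : (b + v) * γ = b := mul_div_cancel₀ b hbv.ne'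
  have hγ0 : 0 ≤ γ := div_nonneg hb hbv.le
  have hγ1 : γ ≤ 1 := (div_le_one hbv).mpr (by linarith)
  have hscale : ((⌊N * γ + 1 / 2⌋₊ : ℝ) / N - γ) ^ 2
      = ((⌊N * γ + 1 / 2⌋₊ : ℝ) - N * γ) ^ 2 / N ^ 2 := by
    field_simp
  rw [excessRisk, hscale, ← min_div_div_right (by positivity)]
  refine le_min ?_ ?_
  · calc (b + v) * (((⌊N * γ + 1 / 2⌋₊ : ℝ) - N * γ) ^ 2 / N ^ 2)
        ≤ (b + v) * (N * γ / 2 / N ^ 2) := by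
          gcongr
          exact sq_natFloor_add_half_sub_le (by positivity)
      _ = (b + v) * γ / (2 * N) := by field_simp
      _ = b / (2 * N) := by rw [hγb]
  · calc (b + v) * (((⌊N * γ + 1 / 2⌋₊ : ℝ) - N * γ) ^ 2 / N ^ 2)
        ≤ (b + v) * ((N - N * γ) / 2 / N ^ 2) := by
          gcongr
          exact sq_natFloor_add_half_sub_le_sub (by positivity) (by nlinarith)
      _ = (b + v) * (1 - γ) / (2 * N) := by field_simp
      _ = v / (2 * N) := by rw [mul_one_sub, hγb, add_sub_cancel_left]

end Rounding

section GridWeights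

variable {N M : ℕ}

theorem exists_grid_weight_tailSum_eq (K : ℕ → ℕ) (hKM : K (M + 1) = 0)
    (hKN : ∀ m ∈ Icc 1 M, K m ≤ N) (hanti : ∀ m ∈ Icc 1 M, K (m + 1) ≤ K m) :
    ∃ w : ℕ → ℝ, (∀ m ∈ Icc 1 M, ∃ k : ℕ, k ≤ N ∧ w m = k / N) ∧
      ∀ m ∈ Icc 1 M, tailSum M w m = K m / N := by
  refine ⟨fun m => ((K m - K (m + 1) : ℕ) : ℝ) / N,
    fun m hm => ⟨_, (Nat.sub_le _ _).trans (hKN m hm), rfl⟩, fun m hm => ?_⟩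
  obtain ⟨hm1, hmM⟩ := mem_Icc.mp hm
  have hstep : ∀ j ∈ Ico m (M + 1), ((K j - K (j + 1) : ℕ) : ℝ) / N
      = -(K (j + 1) : ℝ) / N - (-(K j : ℝ) / N) := fun j hj => by
    have := mem_Ico.mp hj
    rw [Nat.cast_sub (hanti j (mem_Icc.mpr ⟨by omega, by omega⟩))]
    ring
  rw [tailSum, ← Ico_add_one_right_eq_Icc, sum_congr rfl hstep,
    sum_Ico_sub (fun j => -(K j : ℝ) / N) (by omega), hKM]
  simp [neg_div]

theorem exists_grid_weight_tailSum_eq_round (hN : 0 < N) (hM : 1 ≤ M) {γ : ℕ → ℝ}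
    (hγ1 : ∀ m ∈ Icc 2 M, γ m ≤ 1) (hanti : ∀ m ∈ Icc 2 (M - 1), γ (m + 1) ≤ γ m) :
    ∃ w : ℕ → ℝ, (∀ m ∈ Icc 1 M, ∃ k : ℕ, k ≤ N ∧ w m = k / N) ∧ ∑ m ∈ Icc 1 M, w m = 1 ∧
      ∀ m ∈ Icc 2 M, tailSum M w m = ⌊N * γ m + 1 / 2⌋₊ / N := by
  have hround : ∀ m ∈ Icc 2 M, ⌊N * γ m + 1 / 2⌋₊ ≤ N := fun m hm =>
    Nat.le_of_lt_succ <| (Nat.floor_lt' N.succ_ne_zero).mpr <| by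
      push_cast
      nlinarith [hγ1 m hm]
  let K : ℕ → ℕ := fun m => if m = 1 then N else if m ≤ M then ⌊N * γ m + 1 / 2⌋₊ else 0
  have hKN : ∀ m ∈ Icc 1 M, K m ≤ N := fun m hm => by
    obtain ⟨hm1, hmM⟩ := mem_Icc.mp hm
    simp only [K]
    split_ifs with h1
    · rfl
    · exact hround m (mem_Icc.mpr ⟨by omega, hmM⟩)
  have hKanti : ∀ m ∈ Icc 1 M, K (m + 1) ≤ K m := fun m hm => by
    obtain ⟨hm1, hmM⟩ := mem_Icc.mp hm
    simp only [K]
    split_ifs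
    all_goals first
      | omega
      | exact Nat.zero_le _
      | exact hround _ (mem_Icc.mpr ⟨by omega, by omega⟩)
      | exact Nat.floor_le_floor (by gcongr; exact hanti m (mem_Icc.mpr ⟨by omega, by omega⟩))
  obtain ⟨w, hgrid, htail⟩ :=
    exists_grid_weight_tailSum_eq K (by simp [K]; omega) hKN hKanti
  refine ⟨w, hgrid, ?_, fun m hm => ?_⟩
  · simpa [K, tailSum, (Nat.cast_pos.mpr hN).ne'] using htail 1 (left_mem_Icc.mpr hM)
  · obtain ⟨hm2, hmM⟩ := mem_Icc.mp hm
    rw [htail m (mem_Icc.mpr ⟨by omega, hmM⟩)]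
    simp [K, hmM, show m ≠ 1 by omega]

end GridWeights

open Matrix

theorem discrete_grid_gap_general (n M N : ℕ) (hM : 1 ≤ M) (hN : 0 < N)
    (P : ℕ → Matrix (Fin n) (Fin n) ℝ)
    (Ωm : Matrix (Fin n) (Fin n) ℝ) (μ : Fin n → ℝ)
    (hP0 : P 0 = 0)
    (hmin : ∀ i j, i ≤ M → j ≤ M → P i * P j = P (min i j))
    (hsymm : ∀ i, i ≤ M → (P i)ᵀ = P i)
    (b v gs : ℕ → ℝ)
    (hb : ∀ m, b m = μ ⬝ᵥ ((P m - P (m - 1)) *ᵥ μ))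
    (hvdef : ∀ m, v m = ((P m - P (m - 1)) * Ωm).trace)
    (hv : ∀ m ∈ Finset.Icc 1 M, 0 < v m)
    (hgs : ∀ m, gs m = b m / (b m + v m))
    (hgsmono : ∀ m ∈ Finset.Icc 1 (M - 1), gs (m + 1) ≤ gs m)
    (Rm : ℕ → ℝ)
    (hRm : ∀ m, Rm m = μ ⬝ᵥ ((1 - P m) *ᵥ μ) + (P m * Ωm).trace)
    (Rw : (ℕ → ℝ) → ℝ)
    (hRw : ∀ w : ℕ → ℝ, Rw w =
      μ ⬝ᵥ ((((∑ m ∈ Finset.Icc 1 M, w m • P m) - 1) *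
          ((∑ m ∈ Finset.Icc 1 M, w m • P m) - 1)) *ᵥ μ)
        + ((∑ m ∈ Finset.Icc 1 M, w m • P m) *
            (∑ m ∈ Finset.Icc 1 M, w m • P m) * Ωm).trace)
    (mStar : ℕ) (hmStar : mStar ∈ Finset.Icc 1 M)
    (wS : ℕ → ℝ)
    (hwSW : (∀ m ∈ Finset.Icc 1 M, 0 ≤ wS m) ∧
      (∑ m ∈ Finset.Icc 1 M, wS m) = 1)
    (wN : ℕ → ℝ)
    (hwNOpt : ∀ w : ℕ → ℝ,
      (∀ m ∈ Finset.Icc 1 M, ∃ k : ℕ, k ≤ N ∧ w m = (k : ℝ) / N) →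
      (∑ m ∈ Finset.Icc 1 M, w m) = 1 → Rw wN ≤ Rw w) :
    Rw wN - Rw wS ≤ (1 / (2 * (N : ℝ))) * Rm mStar := by
  have hb0 : ∀ m ∈ Icc 1 M, 0 ≤ b m := fun m hm => (hb m).symm ▸
    dotProduct_sub_pred_mulVec_nonneg hmin hsymm (mem_Icc.mp hm).1 (mem_Icc.mp hm).2 μ
  have hbv : ∀ m ∈ Icc 1 M, 0 < b m + v m := fun m hm => by linarith [hb0 m hm, hv m hm]
  have hR : ∀ w, Rw w = μ ⬝ᵥ ((1 - P M) *ᵥ μ)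
      + ∑ m ∈ Icc 1 M, (gs m * v m + excessRisk (b m) (v m) (tailSum M w m)) := fun w => by
    rw [hRw, sum_smul_eq_sum_tailSum_smul_sub_pred hP0]
    refine (averagingRisk_sum_smul_sub_pred hP0 hmin Ωm μ _).trans
      (congrArg _ (sum_congr rfl fun m hm => ?_))
    rw [← hb, ← hvdef, sub_sq_mul_add_sq_mul_eq_add_excessRisk (hbv m hm).ne', ← hgs]
  have hgs1 : ∀ m ∈ Icc 2 M, gs m ≤ 1 := fun m hm => by
    have hm1 := Icc_subset_Icc_left one_le_two hm
    exact (hgs m).trans_le (div_le_one_of_le₀ (by linarith [hv m hm1]) (hbv m hm1).le)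
  obtain ⟨w, hgrid, hsum, htail⟩ := exists_grid_weight_tailSum_eq_round hN hM hgs1
    (fun m hm => hgsmono m (Icc_subset_Icc_left one_le_two hm))
  have hstep : ∀ m ∈ Icc 1 M, excessRisk (b m) (v m) (tailSum M w m)
      - excessRisk (b m) (v m) (tailSum M wS m) ≤ min (b m) (v m) / (2 * N) := by
    intro m hm
    rcases (mem_Icc.mp hm).1.eq_or_lt with rfl | hm2
    · rw [show tailSum M w 1 = tailSum M wS 1 from hsum.trans hwSW.2.symm, sub_self]
      exact div_nonneg (le_min (hb0 1 hm) (hv 1 hm).le) (by positivity)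
    · rw [htail m (mem_Icc.mpr ⟨hm2, (mem_Icc.mp hm).2⟩), hgs]
      linarith [excessRisk_natFloor_le (hb0 m hm) (hv m hm).le (hbv m hm) hN,
        excessRisk_nonneg (hbv m hm).le (tailSum M wS m)]
  calc Rw wN - Rw wS ≤ Rw w - Rw wS := by linarith [hwNOpt w hgrid hsum]
    _ = ∑ m ∈ Icc 1 M, (excessRisk (b m) (v m) (tailSum M w m)
          - excessRisk (b m) (v m) (tailSum M wS m)) := by
      rw [hR, hR, add_sub_add_left_eq_sub, ← sum_sub_distrib]
      exact sum_congr rfl fun m _ => by ring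
    _ ≤ ∑ m ∈ Icc 1 M, min (b m) (v m) / (2 * N) := sum_le_sum hstep
    _ ≤ 1 / (2 * N) * Rm mStar := by
      rw [← sum_div, hRm, one_div_mul_eq_div]
      gcongr
      simpa only [← hb, ← hvdef] using sum_min_le_dotProduct_one_sub_mulVec_add_trace hP0 hmin
        hsymm Ωm μ (mem_Icc.mp hmStar).2

/-- The optimal discrete-grid model-averaging risk exceeds the optimal simplex
model-averaging risk by at most `R(m*)/(2N)`. -/
theorem discrete_grid_gap (n M N : ℕ) (hn : 0 < n) (hM : 1 ≤ M) (hN : 0 < N)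
    (P : ℕ → Matrix (Fin n) (Fin n) ℝ)
    (Ωm : Matrix (Fin n) (Fin n) ℝ) (μ : Fin n → ℝ)
    (hP0 : P 0 = 0)
    (hmin : ∀ i j, i ≤ M → j ≤ M → P i * P j = P (min i j))
    (hsymm : ∀ i, i ≤ M → (P i)ᵀ = P i)
    (b v gs : ℕ → ℝ)
    (hb : ∀ m, b m = μ ⬝ᵥ ((P m - P (m - 1)) *ᵥ μ))
    (hvdef : ∀ m, v m = ((P m - P (m - 1)) * Ωm).trace)
    (hv : ∀ m ∈ Finset.Icc 1 M, 0 < v m)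
    (hgs : ∀ m, gs m = b m / (b m + v m))
    (hgsmono : ∀ m ∈ Finset.Icc 1 (M - 1), gs (m + 1) ≤ gs m)
    (Rm : ℕ → ℝ)
    (hRm : ∀ m, Rm m = μ ⬝ᵥ ((1 - P m) *ᵥ μ) + (P m * Ωm).trace)
    (Rw : (ℕ → ℝ) → ℝ)
    (hRw : ∀ w : ℕ → ℝ, Rw w =
      μ ⬝ᵥ ((((∑ m ∈ Finset.Icc 1 M, w m • P m) - 1) *
          ((∑ m ∈ Finset.Icc 1 M, w m • P m) - 1)) *ᵥ μ)
        + ((∑ m ∈ Finset.Icc 1 M, w m • P m) *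
            (∑ m ∈ Finset.Icc 1 M, w m • P m) * Ωm).trace)
    (mStar : ℕ) (hmStar : mStar ∈ Finset.Icc 1 M)
    (hgsStar : 1 / 2 < gs mStar) (hgsStar' : gs (mStar + 1) ≤ 1 / 2)
    (wS : ℕ → ℝ)
    (hwSW : (∀ m ∈ Finset.Icc 1 M, 0 ≤ wS m) ∧
      (∑ m ∈ Finset.Icc 1 M, wS m) = 1)
    (hwSOpt : ∀ w : ℕ → ℝ, (∀ m ∈ Finset.Icc 1 M, 0 ≤ w m) →
      (∑ m ∈ Finset.Icc 1 M, w m) = 1 → Rw wS ≤ Rw w)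
    (wN : ℕ → ℝ)
    (hwNW : (∀ m ∈ Finset.Icc 1 M, ∃ k : ℕ, k ≤ N ∧ wN m = (k : ℝ) / N) ∧
      (∑ m ∈ Finset.Icc 1 M, wN m) = 1)
    (hwNOpt : ∀ w : ℕ → ℝ,
      (∀ m ∈ Finset.Icc 1 M, ∃ k : ℕ, k ≤ N ∧ w m = (k : ℝ) / N) →
      (∑ m ∈ Finset.Icc 1 M, w m) = 1 → Rw wN ≤ Rw w) :
    Rw wN - Rw wS ≤ (1 / (2 * (N : ℝ))) * Rm mStar :=
  discrete_grid_gap_general n M N hM hN P Ωm μ hP0 hmin hsymm b v gs hb hvdef hv hgs hgsmono Rm hRm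
    Rw hRw mStar hmStar wS hwSW wN hwNOpt
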